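/- arXiv:2303.08763 — 6 statements merged into one kernel-verified Lean document; each statement's English description precedes it below -/
import Mathlib

section
/- Let $u:\mathbb{R}\to\mathbb{R}$ be absolutely continuous with $u'\in L^2(\mathbb{R})$, and set $F_{\mathrm{ac}}(x)=\int_{-\infty}^x u'(z)^2dz$, $F_{\mathrm{ac},\infty}=\int_{\mathbb{R}}u'(z)^2dz$. For a uniform grid $x_j=j\Delta x$ and any $x\in[x_{2j},x_{2j+1}]$, one has $\left|\frac{x_{2j+2}-x}{2\Delta x}(u(x)-u(x_{2j}))+\frac{x-x_{2j}}{2\Delta x}(u(x)-u(x_{2j+2}))\right|\leq(1+\sqrt{2})\sqrt{\tfrac{F_{\mathrm{ac}}(x_{2j+2})-F_{\mathrm{ac}}(x_{2j})}{2}}\,\Delta x^{1/2}$. -/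
open MeasureTheory intervalIntegral

/-! By Cauchy–Schwarz, `|u b - u a| ≤ √(b - a) * √(Fac b - Fac a)`. For `x` in the left half of the
cell `[x₂ⱼ, x₂ⱼ₊₂]`, the two deviations `u x - u x₂ⱼ` and `u x - u x₂ⱼ₊₂` span lengths at most `Δx`
and `2Δx`, and `Fac` grows by at most `D = Fac x₂ⱼ₊₂ - Fac x₂ⱼ` on each. Their weights are at most
`1` and `1/2`, so the combination is bounded by `(1 + √2 / 2) √Δx √D = (1 + √2) √(D / 2) √Δx`. -/

theorem integral_abs_le_sqrt_measureReal_mul_sqrt_integral_sq {α : Type*} [MeasurableSpace α]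
    {μ : Measure α} [IsFiniteMeasure μ] {f : α → ℝ} (hf : Integrable (fun z => f z ^ 2) μ) :
    ∫ z, |f z| ∂μ ≤ √(μ.real Set.univ) * √(∫ z, f z ^ 2 ∂μ) := by
  have hmeas : AEStronglyMeasurable (fun z => |f z|) μ := by
    simpa only [Real.sqrt_sq_eq_abs] using hf.1.aemeasurable.sqrt.aestronglyMeasurable
  have habs : MemLp (fun z => |f z|) (ENNReal.ofReal 2) μ := by
    rw [ENNReal.ofReal_ofNat, memLp_two_iff_integrable_sq hmeas]
    simpa only [sq_abs] using hf
  have hone : MemLp (fun _ => (1 : ℝ)) (ENNReal.ofReal 2) μ := memLp_const 1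
  have holder := integral_mul_le_Lp_mul_Lq_of_nonneg Real.HolderConjugate.two_two
    (.of_forall fun z => abs_nonneg (f z)) (.of_forall fun _ => zero_le_one) habs hone
  simp only [mul_one, Real.rpow_two, sq_abs, one_pow, MeasureTheory.integral_const,
    smul_eq_mul] at holder
  rw [mul_comm, Real.sqrt_eq_rpow, Real.sqrt_eq_rpow]
  convert holder using 3

theorem abs_intervalIntegral_le_sqrt_mul_sqrt {f : ℝ → ℝ} {a b : ℝ} (hab : a ≤ b)
    (hf : IntervalIntegrable (fun z => f z ^ 2) volume a b) :
    |∫ z in a..b, f z| ≤ √(b - a) * √(∫ z in a..b, f z ^ 2) := by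
  calc |∫ z in a..b, f z| ≤ ∫ z in a..b, |f z| :=
      intervalIntegral.norm_integral_le_integral_norm (f := f) hab
    _ ≤ √(b - a) * √(∫ z in a..b, f z ^ 2) := by
      rw [integral_of_le hab, integral_of_le hab]
      convert integral_abs_le_sqrt_measureReal_mul_sqrt_integral_sq hf.1 using 3
      simp [hab]

theorem integral_Iio_sub_Iio {g : ℝ → ℝ} (hg : Integrable g) (a b : ℝ) :
    (∫ z in Set.Iio b, g z) - ∫ z in Set.Iio a, g z = ∫ z in a..b, g z := by
  rw [← integral_Iic_eq_integral_Iio, ← integral_Iic_eq_integral_Iio]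
  exact integral_Iic_sub_Iic hg.integrableOn hg.integrableOn

theorem abs_weighted_deviation_le {a x h p q D : ℝ} (hax : a ≤ x) (hxa : x ≤ a + h)
    (hp : |p| ≤ √h * √D) (hq : |q| ≤ √(2 * h) * √D) :
    |(a + 2 * h - x) / (2 * h) * p + (x - a) / (2 * h) * q| ≤ (1 + √2) * √(D / 2) * √h := by
  have h2h : 0 ≤ 2 * h := by linarith
  have hw₁ : (a + 2 * h - x) / (2 * h) ≤ 1 := div_le_one_of_le₀ (by linarith) h2h
  have hw₂ : (x - a) / (2 * h) ≤ 1 / 2 := div_le_of_le_mul₀ h2h (by norm_num) (by linarith)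
  have hw₁0 : 0 ≤ (a + 2 * h - x) / (2 * h) := div_nonneg (by linarith) h2h
  have hw₂0 : 0 ≤ (x - a) / (2 * h) := div_nonneg (by linarith) h2h
  have hsqrt2 : √2 * √2 = 2 := Real.mul_self_sqrt zero_le_two
  calc |(a + 2 * h - x) / (2 * h) * p + (x - a) / (2 * h) * q|
      ≤ (a + 2 * h - x) / (2 * h) * |p| + (x - a) / (2 * h) * |q| := by
        refine (abs_add_le _ _).trans_eq ?_
        rw [abs_mul, abs_mul, abs_of_nonneg hw₁0, abs_of_nonneg hw₂0]
    _ ≤ 1 * (√h * √D) + 1 / 2 * (√(2 * h) * √D) := by gcongr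
    _ = (1 + √2) * √(D / 2) * √h := by
        rw [Real.sqrt_mul zero_le_two, Real.sqrt_div' D zero_le_two]
        field_simp
        linear_combination (√h * √D) * hsqrt2

theorem monotone_integral_Iio_of_nonneg {g : ℝ → ℝ} (hg : Integrable g) (hg0 : 0 ≤ g) :
    Monotone fun x => ∫ z in Set.Iio x, g z := fun a b hab => by
  rw [← sub_nonneg, integral_Iio_sub_Iio hg]
  exact intervalIntegral.integral_nonneg hab fun z _ => hg0 z

theorem stmt1_general (u u' : ℝ → ℝ) (Δx : ℝ)
    (hu : ∀ a b : ℝ, u b - u a = ∫ z in a..b, u' z)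
    (hu'sq : Integrable (fun z => (u' z)^2))
    (Fac : ℝ → ℝ) (hF : ∀ x, Fac x = ∫ z in Set.Iio x, (u' z)^2)
    (j : ℤ) (x : ℝ) (hx : x ∈ Set.Icc ((2*(j:ℝ))*Δx) ((2*(j:ℝ)+1)*Δx)) :
    |((2*(j:ℝ)+2)*Δx - x)/(2*Δx) * (u x - u ((2*(j:ℝ))*Δx))
      + (x - (2*(j:ℝ))*Δx)/(2*Δx) * (u x - u ((2*(j:ℝ)+2)*Δx))|
    ≤ (1 + Real.sqrt 2) * Real.sqrt ((Fac ((2*(j:ℝ)+2)*Δx) - Fac ((2*(j:ℝ))*Δx))/2)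
        * Real.sqrt Δx := by
  set a := 2 * (j : ℝ) * Δx
  obtain ⟨hax, hxa⟩ := hx
  replace hxa : x ≤ a + Δx := by linarith
  rw [show (2 * (j : ℝ) + 2) * Δx = a + 2 * Δx by ring]
  have hFac_sub {c d : ℝ} (hcd : c ≤ d) : |u d - u c| ≤ √(d - c) * √(Fac d - Fac c) := by
    rw [hu, hF, hF, integral_Iio_sub_Iio hu'sq]
    exact abs_intervalIntegral_le_sqrt_mul_sqrt hcd hu'sq.intervalIntegrable
  have hFac_mono : Monotone Fac := by
    simpa only [← funext hF] using monotone_integral_Iio_of_nonneg hu'sq fun z => sq_nonneg _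
  refine abs_weighted_deviation_le hax hxa ?_ ?_
  · refine (hFac_sub hax).trans ?_
    gcongr
    · linarith
    · exact hFac_mono (by linarith)
  · rw [abs_sub_comm]
    refine (hFac_sub (by linarith)).trans ?_
    gcongr
    · linarith
    · exact hFac_mono hax

/-- Interpolation error estimate for the convex combination of deviations of `u`
from its grid values, on `[x_{2j}, x_{2j+1}]`. -/
theorem stmt1 (u u' : ℝ → ℝ) (Δx : ℝ) (hΔx : 0 < Δx)
    (hu : ∀ a b : ℝ, u b - u a = ∫ z in a..b, u' z)
    (hu'sq : Integrable (fun z => (u' z)^2))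
    (Fac : ℝ → ℝ) (hF : ∀ x, Fac x = ∫ z in Set.Iio x, (u' z)^2)
    (j : ℤ) (x : ℝ) (hx : x ∈ Set.Icc ((2*(j:ℝ))*Δx) ((2*(j:ℝ)+1)*Δx)) :
    |((2*(j:ℝ)+2)*Δx - x)/(2*Δx) * (u x - u ((2*(j:ℝ))*Δx))
      + (x - (2*(j:ℝ))*Δx)/(2*Δx) * (u x - u ((2*(j:ℝ)+2)*Δx))|
    ≤ (1 + Real.sqrt 2) * Real.sqrt ((Fac ((2*(j:ℝ)+2)*Δx) - Fac ((2*(j:ℝ))*Δx))/2)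
        * Real.sqrt Δx :=
  stmt1_general u u' Δx hu hu'sq Fac hF j x hx
end

section
/- Let $u:\mathbb{R}\to\mathbb{R}$ be absolutely continuous with $u'\in L^2(\mathbb{R})$ and let $u_{\Delta x}$ be the piecewise linear projection defined on each double cell $[x_{2j},x_{2j+2}]$ by $u_{\Delta x}(x)=u(x_{2j})+(Du_{2j}\mp q_{2j})(x-x_{2j})$ for $x\in[x_{2j},x_{2j+1}]$ and $u_{\Delta x}(x)=u(x_{2j+2})+(Du_{2j}\pm q_{2j})(x-x_{2j+2})$ for $x\in[x_{2j+1},x_{2j+2}]$, where $Du_{2j}=\frac{u(x_{2j+2})-u(x_{2j})}{2\Delta x}$ and $q_{2j}=\sqrt{\frac{1}{2\Delta x}\int_{x_{2j}}^{x_{2j+2}}u'(z)^2dz-(Du_{2j})^2}$. Then $\|u-u_{\Delta x}\|_{L^\infty(\mathbb{R})}\leq(1+\sqrt{2})\sqrt{F_{\mathrm{ac},\infty}}\,\Delta x^{1/2}$, where $F_{\mathrm{ac},\infty}=\int_{\mathbb{R}}u'(z)^2dz$. -/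
open MeasureTheory intervalIntegral

/-- The slope average `Du_2j` on the double cell `[x_{2j}, x_{2j+2}]`. -/
noncomputable def Du (u : ℝ → ℝ) (Δx : ℝ) (j : ℤ) : ℝ :=
  (u ((2*(j:ℝ)+2)*Δx) - u ((2*(j:ℝ))*Δx)) / (2*Δx)

/-- The quantity `q_2j = sqrt(DF_ac,2j - (Du_2j)^2)`. -/
noncomputable def qq (u u' : ℝ → ℝ) (Δx : ℝ) (j : ℤ) : ℝ :=
  Real.sqrt ((1/(2*Δx)) * (∫ z in ((2*(j:ℝ))*Δx)..((2*(j:ℝ)+2)*Δx), (u' z)^2)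
    - (Du u Δx j)^2)

/-! On each half cell the projection is affine through a node `a` with `|x - a| ≤ Δx`, so
`u x - u_Δx x = ∫_a^x u' - m (x - a)`, and Cauchy–Schwarz bounds the integral by `√Δx ‖u'‖₂`.
For the slope `m = Du ± q`, Cauchy–Schwarz on the double cell gives `Du² ≤ D`, where
`D = (1/2Δx) ∫_cell u'²` is the quantity under the root in `q = √(D - Du²)`; hence `|Du|` and `q`
are at most `√D ≤ ‖u'‖₂ / √(2Δx)`, and `|m| Δx ≤ √2 ‖u'‖₂ √Δx`. -/

open Set

theorem sq_integral_le_measureReal_mul_integral_sq {α : Type*} [MeasurableSpace α]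
    {μ : Measure α} [IsFiniteMeasure μ] {f : α → ℝ} (hf2 : Integrable (fun x => f x ^ 2) μ) :
    (∫ x, f x ∂μ) ^ 2 ≤ μ.real univ * ∫ x, f x ^ 2 ∂μ := by
  by_cases hf : Integrable f μ
  swap
  · rw [integral_undef hf, zero_pow two_ne_zero]
    exact mul_nonneg measureReal_nonneg (integral_nonneg fun x => sq_nonneg (f x))
  set c := μ.real univ
  set I := ∫ x, f x ∂μ
  rcases measureReal_nonneg.eq_or_lt with hc | hc
  · have hμ : μ = 0 := Measure.measure_univ_eq_zero.mp <|
      (measureReal_eq_zero_iff (measure_ne_top μ univ)).mp hc.symm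
    simp [I, hμ]
  have hexpand : ∫ x, (c * f x - I) ^ 2 ∂μ = c * (c * ∫ x, f x ^ 2 ∂μ - I ^ 2) := by
    have h : (fun x => (c * f x - I) ^ 2) = fun x => c ^ 2 * f x ^ 2 - 2 * c * I * f x + I ^ 2 := by
      funext x; ring
    rw [h, MeasureTheory.integral_add, MeasureTheory.integral_sub,
      MeasureTheory.integral_const_mul, MeasureTheory.integral_const_mul,
      MeasureTheory.integral_const, smul_eq_mul]
    · ring
    all_goals fun_prop
  have h0 : 0 ≤ ∫ x, (c * f x - I) ^ 2 ∂μ := integral_nonneg fun x => sq_nonneg _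
  rw [hexpand] at h0
  nlinarith

theorem sq_intervalIntegral_le (f : ℝ → ℝ) (a b : ℝ)
    (hf2 : IntegrableOn (fun x => f x ^ 2) (uIoc a b)) :
    (∫ x in a..b, f x) ^ 2 ≤ |b - a| * ∫ x in uIoc a b, f x ^ 2 := by
  have : IsFiniteMeasure (volume.restrict (uIoc a b)) :=
    isFiniteMeasure_restrict.mpr (by simp [Real.volume_uIoc])
  rw [← sq_abs, abs_integral_eq_abs_integral_uIoc, sq_abs]
  have h := sq_integral_le_measureReal_mul_integral_sq hf2
  rwa [measureReal_restrict_apply_univ, Measure.real, Real.volume_uIoc,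
    ENNReal.toReal_ofReal (abs_nonneg _)] at h

theorem abs_intervalIntegral_le_sqrt_mul_sqrt_integral_sq {f : ℝ → ℝ}
    (hf2 : Integrable (fun x => f x ^ 2)) (a b : ℝ) :
    |∫ x in a..b, f x| ≤ √|b - a| * √(∫ x, f x ^ 2) := by
  rw [← Real.sqrt_sq_eq_abs, ← Real.sqrt_mul (abs_nonneg _)]
  refine Real.sqrt_le_sqrt ((sq_intervalIntegral_le f a b hf2.integrableOn).trans ?_)
  exact mul_le_mul_of_nonneg_left
    (setIntegral_le_integral hf2 (.of_forall fun x => sq_nonneg _)) (abs_nonneg _)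

theorem abs_add_mul_sqrt_sub_sq_le {d D ε : ℝ} (hd : d ^ 2 ≤ D) (hε : |ε| = 1) :
    |d + ε * √(D - d ^ 2)| ≤ 2 * √D := by
  have hd' : |d| ≤ √D := Real.abs_le_sqrt hd
  have hq : √(D - d ^ 2) ≤ √D := Real.sqrt_le_sqrt (by nlinarith)
  calc |d + ε * √(D - d ^ 2)| ≤ |d| + |ε * √(D - d ^ 2)| := abs_add_le _ _
    _ = |d| + √(D - d ^ 2) := by rw [abs_mul, hε, one_mul, abs_of_nonneg (Real.sqrt_nonneg _)]
    _ ≤ 2 * √D := by linarith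

theorem abs_sub_affine_le {u u' : ℝ → ℝ} (hu : ∀ a b : ℝ, u b - u a = ∫ z in a..b, u' z)
    (hu'sq : Integrable (fun z => u' z ^ 2)) {a x h : ℝ} (m : ℝ) (hx : |x - a| ≤ h) :
    |u x - (u a + m * (x - a))| ≤ √h * √(∫ z, u' z ^ 2) + |m| * h := by
  rw [show u x - (u a + m * (x - a)) = (∫ z in a..x, u' z) - m * (x - a) by rw [← hu]; ring]
  calc |(∫ z in a..x, u' z) - m * (x - a)| ≤ |∫ z in a..x, u' z| + |m * (x - a)| := abs_sub _ _
    _ ≤ √h * √(∫ z, u' z ^ 2) + |m| * h := by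
      gcongr
      · exact (abs_intervalIntegral_le_sqrt_mul_sqrt_integral_sq hu'sq a x).trans (by gcongr)
      · rw [abs_mul]; gcongr

theorem abs_Du_add_mul_qq_mul_le {u u' : ℝ → ℝ} {Δx : ℝ} (hΔx : 0 < Δx)
    (hu : ∀ a b : ℝ, u b - u a = ∫ z in a..b, u' z)
    (hu'sq : Integrable (fun z => u' z ^ 2)) (j : ℤ) {ε : ℝ} (hε : |ε| = 1) :
    |Du u Δx j + ε * qq u u' Δx j| * Δx ≤ √2 * √(∫ z, u' z ^ 2) * √Δx := by
  set a := 2 * (j : ℝ) * Δx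
  set b := (2 * (j : ℝ) + 2) * Δx
  set F := ∫ z, u' z ^ 2
  set D := 1 / (2 * Δx) * ∫ z in a..b, u' z ^ 2
  have hba : b - a = 2 * Δx := by ring
  have hab : a ≤ b := by linarith
  have hDu : Du u Δx j ^ 2 ≤ D := by
    have h := sq_intervalIntegral_le u' a b hu'sq.integrableOn
    rw [uIoc_of_le hab, ← integral_of_le hab, abs_of_nonneg (by linarith), hba] at h
    rw [Du, hu, div_pow, show D = (2 * Δx) * (∫ z in a..b, u' z ^ 2) / (2 * Δx) ^ 2 by
      simp only [D]; field_simp]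
    gcongr
  have hD : D ≤ F / (2 * Δx) := by
    simp only [D]
    rw [one_div_mul_eq_div]
    gcongr
    rw [integral_of_le hab]
    exact setIntegral_le_integral hu'sq (.of_forall fun z => sq_nonneg _)
  have hF : 0 ≤ F := integral_nonneg fun z => sq_nonneg _
  calc |Du u Δx j + ε * qq u u' Δx j| * Δx ≤ 2 * √D * Δx := by
        gcongr
        exact abs_add_mul_sqrt_sub_sq_le hDu hε
    _ ≤ 2 * √(F / (2 * Δx)) * Δx := by gcongr
    _ = √2 * √F * √Δx := by
      rw [Real.sqrt_div hF, Real.sqrt_mul zero_le_two]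
      have h2 : √2 ^ 2 = 2 := Real.sq_sqrt zero_le_two
      have hΔ : √Δx ^ 2 = Δx := Real.sq_sqrt hΔx.le
      have : 0 < √Δx := Real.sqrt_pos.mpr hΔx
      field_simp
      rw [h2, hΔ]
      ring

theorem exists_int_mem_left_or_right_halfCell {Δx : ℝ} (hΔx : 0 < Δx) (x : ℝ) :
    ∃ j : ℤ, x ∈ Icc (2 * j * Δx) ((2 * j + 1) * Δx) ∨
      x ∈ Icc ((2 * j + 1) * Δx) ((2 * j + 2) * Δx) := by
  refine ⟨⌊x / (2 * Δx)⌋, ?_⟩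
  have h1 := Int.floor_le (x / (2 * Δx))
  have h2 := Int.lt_floor_add_one (x / (2 * Δx))
  rw [le_div_iff₀ (by positivity)] at h1
  rw [div_lt_iff₀ (by positivity)] at h2
  rcases le_total x ((2 * ⌊x / (2 * Δx)⌋ + 1) * Δx) with h | h
  · exact Or.inl ⟨by linarith, h⟩
  · exact Or.inr ⟨h, by linarith⟩

/-- `L^∞`-error estimate for the piecewise linear projection `u_Δx`. -/
theorem stmt2 (u u' uD : ℝ → ℝ) (Δx : ℝ) (hΔx : 0 < Δx)
    (hu : ∀ a b : ℝ, u b - u a = ∫ z in a..b, u' z)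
    (hu'sq : Integrable (fun z => (u' z)^2))
    (s : ℤ → ℝ) (hs : ∀ j, s j = 1 ∨ s j = -1)
    (huD1 : ∀ j : ℤ, ∀ x ∈ Set.Icc ((2*(j:ℝ))*Δx) ((2*(j:ℝ)+1)*Δx),
      uD x = u ((2*(j:ℝ))*Δx) + (Du u Δx j - s j * qq u u' Δx j) * (x - (2*(j:ℝ))*Δx))
    (huD2 : ∀ j : ℤ, ∀ x ∈ Set.Icc ((2*(j:ℝ)+1)*Δx) ((2*(j:ℝ)+2)*Δx),
      uD x = u ((2*(j:ℝ)+2)*Δx) + (Du u Δx j + s j * qq u u' Δx j) * (x - (2*(j:ℝ)+2)*Δx)) :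
    ∀ x, |u x - uD x| ≤ (1 + Real.sqrt 2) * Real.sqrt (∫ z, (u' z)^2) * Real.sqrt Δx := by
  intro x
  have affine_bound : ∀ a m, |x - a| ≤ Δx → |m| * Δx ≤ √2 * √(∫ z, (u' z)^2) * √Δx →
      |u x - (u a + m * (x - a))| ≤ (1 + √2) * √(∫ z, (u' z)^2) * √Δx := fun a m hx hm => by
    linarith [abs_sub_affine_le hu hu'sq m hx]
  have abs_s : ∀ j, |s j| = 1 := fun j => by rcases hs j with h | h <;> simp [h]
  obtain ⟨j, hx | hx⟩ := exists_int_mem_left_or_right_halfCell hΔx x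
  · rw [huD1 j x hx, sub_eq_add_neg (Du u Δx j), ← neg_mul]
    exact affine_bound _ _ (abs_le.mpr ⟨by linarith [hx.1, hx.2], by linarith [hx.1, hx.2]⟩)
      (abs_Du_add_mul_qq_mul_le hΔx hu hu'sq j (by rw [abs_neg]; exact abs_s j))
  · rw [huD2 j x hx]
    exact affine_bound _ _ (abs_le.mpr ⟨by linarith [hx.1, hx.2], by linarith [hx.1, hx.2]⟩)
      (abs_Du_add_mul_qq_mul_le hΔx hu hu'sq j (abs_s j))
end

section
/- With the same hypotheses and projection operator as in the $L^\infty$-estimate, one has the $L^2$-error bound $\|u-u_{\Delta x}\|_{L^2(\mathbb{R})}\leq\sqrt{2}(1+\sqrt{2})\sqrt{F_{\mathrm{ac},\infty}}\,\Delta x$. -/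
/-!
On a double cell of length `2Δx` with energy `F = ∫ u'^2`, Cauchy–Schwarz gives
`Du^2 ≤ F/(2Δx)`, so `q` is well defined and `Du^2 + q^2 = F/(2Δx)`; hence both slopes
`Du ± q` of `u_Δx` satisfy `(Du ± q)^2 Δx ≤ F`. Measured from the nearer endpoint of the cell,
where `u_Δx = u`, the increment of `u` is at most `√(FΔx)` by Cauchy–Schwarz and that of `u_Δx`
at most `√(FΔx)` by the slope bound, so `|u - u_Δx| ≤ 2√(FΔx)` on the cell. Squaring,
integrating over the cell and summing over all cells, whose energies add up to `‖u'‖²`, gives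
`‖u - u_Δx‖ ≤ 2√2 ‖u'‖ Δx`.
-/

open MeasureTheory intervalIntegral

open Set

theorem sq_intervalIntegral_le_mul_intervalIntegral_sq {f : ℝ → ℝ} {a b : ℝ} (hab : a ≤ b)
    (hf2 : IntervalIntegrable (fun x => f x ^ 2) volume a b) :
    (∫ x in a..b, f x) ^ 2 ≤ (b - a) * ∫ x in a..b, f x ^ 2 := by
  by_cases hf : IntervalIntegrable f volume a b
  swap
  · rw [integral_undef hf, zero_pow two_ne_zero]
    exact mul_nonneg (sub_nonneg.2 hab) (integral_nonneg hab fun x _ => sq_nonneg _)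
  set I := ∫ x in a..b, f x with hI
  have hvar : ∫ x in a..b, ((b - a) * f x - I) ^ 2
      = (b - a) * ((b - a) * (∫ x in a..b, f x ^ 2) - I ^ 2) := by
    have hexpand : (fun x => ((b - a) * f x - I) ^ 2)
        = fun x => (b - a) ^ 2 * f x ^ 2 - 2 * (b - a) * I * f x + I ^ 2 := by
      ext x; ring
    rw [hexpand,
      intervalIntegral.integral_add ((hf2.const_mul _).sub (hf.const_mul _))
        intervalIntegrable_const,
      intervalIntegral.integral_sub (hf2.const_mul _) (hf.const_mul _),
      intervalIntegral.integral_const_mul, intervalIntegral.integral_const_mul,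
      intervalIntegral.integral_const, smul_eq_mul, ← hI]
    ring
  have hprod : 0 ≤ (b - a) * ((b - a) * (∫ x in a..b, f x ^ 2) - I ^ 2) :=
    hvar ▸ integral_nonneg hab fun x _ => sq_nonneg _
  rcases hab.eq_or_lt with rfl | hlt
  · simp [I]
  · linarith [(mul_nonneg_iff_of_pos_left (sub_pos.2 hlt)).1 hprod]

theorem eLpNorm_two_le_iff {α ε : Type*} [MeasurableSpace α] [ENorm ε] {μ : Measure α}
    {f : α → ε} {C : ENNReal} :
    eLpNorm f 2 μ ≤ C ↔ ∫⁻ x, ‖f x‖ₑ ^ 2 ∂μ ≤ C ^ 2 := by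
  rw [eLpNorm_eq_lintegral_rpow_enorm_toReal two_ne_zero ENNReal.ofNat_ne_top,
    ENNReal.toReal_ofNat, one_div, ENNReal.rpow_inv_le_iff two_pos]
  simp only [ENNReal.rpow_two]

theorem iUnion_Ico_intCast_mul {p : ℝ} (hp : 0 < p) :
    ⋃ n : ℤ, Ico (n * p) ((n + 1) * p) = univ := by
  simpa only [zsmul_eq_mul, Int.cast_add, Int.cast_one] using iUnion_Ico_zsmul hp

theorem pairwise_disjoint_Ico_intCast_mul (p : ℝ) :
    Pairwise (Function.onFun Disjoint fun n : ℤ => Ico (n * p) ((n + 1) * p)) := by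
  simpa only [zero_add, zsmul_eq_mul, Int.cast_add, Int.cast_one] using
    pairwise_disjoint_Ico_add_zsmul (0 : ℝ) p

theorem eLpNorm_two_le_of_abs_le_mul_sqrt_cell {f g : ℝ → ℝ} {p c : ℝ} (hp : 0 < p) (hc : 0 ≤ c)
    (hg : Integrable g) (hg_nonneg : ∀ x, 0 ≤ g x)
    (hf : ∀ (n : ℤ), ∀ x ∈ Ico (n * p) ((n + 1) * p),
      |f x| ≤ c * Real.sqrt (∫ z in n * p..(n + 1) * p, g z)) :
    eLpNorm f 2 volume ≤ ENNReal.ofReal (c * Real.sqrt (p * ∫ z, g z)) := by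
  set cell : ℤ → Set ℝ := fun n => Ico (n * p) ((n + 1) * p)
  have hcell_le : ∀ n : ℤ, (n : ℝ) * p ≤ (n + 1) * p := fun n => by nlinarith
  have hg_cell_nonneg : ∀ n : ℤ, 0 ≤ ∫ z in n * p..(n + 1) * p, g z :=
    fun n => integral_nonneg (hcell_le n) fun z _ => hg_nonneg z
  have hg_cell : ∀ n : ℤ,
      ENNReal.ofReal (∫ z in n * p..(n + 1) * p, g z) = ∫⁻ z in cell n, ENNReal.ofReal (g z) := by
    intro n
    rw [integral_of_le (hcell_le n), ← integral_Ico_eq_integral_Ioc,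
      ofReal_integral_eq_lintegral_ofReal hg.integrableOn (.of_forall hg_nonneg)]
  have hf_cell : ∀ n : ℤ, ∫⁻ x in cell n, ‖f x‖ₑ ^ 2
      ≤ ENNReal.ofReal (c ^ 2 * p) * ENNReal.ofReal (∫ z in n * p..(n + 1) * p, g z) := by
    intro n
    calc ∫⁻ x in cell n, ‖f x‖ₑ ^ 2
        ≤ ∫⁻ _ in cell n, ENNReal.ofReal (c ^ 2 * ∫ z in n * p..(n + 1) * p, g z) := by
          refine setLIntegral_mono measurable_const fun x hx => ?_
          rw [Real.enorm_eq_ofReal_abs, ← ENNReal.ofReal_pow (abs_nonneg _)]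
          refine ENNReal.ofReal_le_ofReal ?_
          have := pow_le_pow_left₀ (abs_nonneg _) (hf n x hx) 2
          rwa [mul_pow, Real.sq_sqrt (hg_cell_nonneg n)] at this
      _ = _ := by
          rw [setLIntegral_const, Real.volume_Ico,
            ← ENNReal.ofReal_mul (mul_nonneg (sq_nonneg c) (hg_cell_nonneg n)),
            ← ENNReal.ofReal_mul (by positivity)]
          congr 1
          ring
  rw [eLpNorm_two_le_iff, ← setLIntegral_univ, ← iUnion_Ico_intCast_mul hp,
    lintegral_iUnion (fun n => measurableSet_Ico) (pairwise_disjoint_Ico_intCast_mul p)]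
  calc ∑' n : ℤ, ∫⁻ x in cell n, ‖f x‖ₑ ^ 2
      ≤ ∑' n : ℤ, ENNReal.ofReal (c ^ 2 * p) * ENNReal.ofReal (∫ z in n * p..(n + 1) * p, g z) :=
        ENNReal.tsum_le_tsum hf_cell
    _ = ENNReal.ofReal (c ^ 2 * p) * ENNReal.ofReal (∫ z, g z) := by
        rw [ENNReal.tsum_mul_left, tsum_congr hg_cell,
          ← lintegral_iUnion (fun n => measurableSet_Ico) (pairwise_disjoint_Ico_intCast_mul p),
          iUnion_Ico_intCast_mul hp, setLIntegral_univ,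
          ofReal_integral_eq_lintegral_ofReal hg (.of_forall hg_nonneg)]
    _ = ENNReal.ofReal (c * Real.sqrt (p * ∫ z, g z)) ^ 2 := by
        rw [← ENNReal.ofReal_mul (by positivity), ← ENNReal.ofReal_pow (by positivity), mul_pow,
          Real.sq_sqrt (mul_nonneg hp.le (integral_nonneg hg_nonneg)), mul_assoc]

theorem abs_sub_mul_le_of_sq_le {e m d h F : ℝ} (hh : 0 ≤ h) (he : e ^ 2 ≤ h * F)
    (hm : m ^ 2 * h ≤ F) (hd : |d| ≤ h) :
    |e - m * d| ≤ 2 * Real.sqrt F * Real.sqrt h := by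
  have he' : |e| ≤ Real.sqrt F * Real.sqrt h := by
    rw [← Real.sqrt_mul' _ hh]
    exact Real.abs_le_sqrt (by linarith)
  have hmd : |m * d| ≤ Real.sqrt F * Real.sqrt h := by
    rw [← Real.sqrt_mul' _ hh]
    have hd2 : d ^ 2 ≤ h ^ 2 := sq_abs d ▸ pow_le_pow_left₀ (abs_nonneg d) hd 2
    exact Real.abs_le_sqrt (by nlinarith [sq_nonneg m])
  calc |e - m * d| ≤ |e| + |m * d| := abs_sub _ _
    _ ≤ 2 * Real.sqrt F * Real.sqrt h := by linarith

/-- `F_ac(x_{2j+2}) - F_ac(x_{2j})`. -/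
noncomputable def cellEnergy (u' : ℝ → ℝ) (Δx : ℝ) (j : ℤ) : ℝ :=
  ∫ z in (2 * (j : ℝ)) * Δx..(2 * (j : ℝ) + 2) * Δx, u' z ^ 2

section Cell

variable {u u' : ℝ → ℝ} {Δx : ℝ}

theorem cellEnergy_nonneg (hΔx : 0 ≤ Δx) (j : ℤ) : 0 ≤ cellEnergy u' Δx j :=
  integral_nonneg (by linarith) fun z _ => sq_nonneg (u' z)

theorem sq_sub_le_mul_cellEnergy (hu : ∀ a b : ℝ, u b - u a = ∫ z in a..b, u' z)
    (hu'sq : Integrable fun z => u' z ^ 2) {j : ℤ} {a b : ℝ} (ha : (2 * (j : ℝ)) * Δx ≤ a)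
    (hab : a ≤ b) (hb : b ≤ (2 * (j : ℝ) + 2) * Δx) :
    (u b - u a) ^ 2 ≤ (b - a) * cellEnergy u' Δx j := by
  rw [hu]
  refine (sq_intervalIntegral_le_mul_intervalIntegral_sq hab hu'sq.intervalIntegrable).trans ?_
  exact mul_le_mul_of_nonneg_left (integral_mono_interval ha hab hb
    (.of_forall fun z => sq_nonneg (u' z)) hu'sq.intervalIntegrable) (sub_nonneg.2 hab)

theorem sq_Du_le (hΔx : 0 < Δx) (hu : ∀ a b : ℝ, u b - u a = ∫ z in a..b, u' z)
    (hu'sq : Integrable fun z => u' z ^ 2) (j : ℤ) :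
    Du u Δx j ^ 2 ≤ 1 / (2 * Δx) * cellEnergy u' Δx j := by
  rw [Du, div_pow, div_le_iff₀ (by positivity)]
  refine (sq_sub_le_mul_cellEnergy (j := j) hu hu'sq le_rfl (by linarith) le_rfl).trans_eq ?_
  field_simp
  ring

theorem sq_Du_add_sq_qq (hΔx : 0 < Δx) (hu : ∀ a b : ℝ, u b - u a = ∫ z in a..b, u' z)
    (hu'sq : Integrable fun z => u' z ^ 2) (j : ℤ) :
    Du u Δx j ^ 2 + qq u u' Δx j ^ 2 = 1 / (2 * Δx) * cellEnergy u' Δx j := by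
  rw [show qq u u' Δx j = Real.sqrt (1 / (2 * Δx) * cellEnergy u' Δx j - Du u Δx j ^ 2) from rfl,
    Real.sq_sqrt (sub_nonneg.2 (sq_Du_le hΔx hu hu'sq j))]
  exact add_sub_cancel _ _

theorem sq_Du_add_mul_qq_mul_le (hΔx : 0 < Δx) (hu : ∀ a b : ℝ, u b - u a = ∫ z in a..b, u' z)
    (hu'sq : Integrable fun z => u' z ^ 2) (j : ℤ) {ε : ℝ} (hε : ε ^ 2 = 1) :
    (Du u Δx j + ε * qq u u' Δx j) ^ 2 * Δx ≤ cellEnergy u' Δx j := by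
  have hsum := sq_Du_add_sq_qq hΔx hu hu'sq j
  calc (Du u Δx j + ε * qq u u' Δx j) ^ 2 * Δx
      ≤ 2 * (Du u Δx j ^ 2 + qq u u' Δx j ^ 2) * Δx := by
        refine mul_le_mul_of_nonneg_right ?_ hΔx.le
        nlinarith [sq_nonneg (Du u Δx j - ε * qq u u' Δx j)]
    _ = cellEnergy u' Δx j := by rw [hsum]; field_simp

theorem abs_sub_le_of_mem_cell (hΔx : 0 < Δx) (hu : ∀ a b : ℝ, u b - u a = ∫ z in a..b, u' z)
    (hu'sq : Integrable fun z => u' z ^ 2) {uD : ℝ → ℝ} {j : ℤ} {s : ℝ} (hs : s ^ 2 = 1)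
    (huD1 : ∀ x ∈ Icc ((2 * (j : ℝ)) * Δx) ((2 * (j : ℝ) + 1) * Δx),
      uD x = u ((2 * (j : ℝ)) * Δx) + (Du u Δx j - s * qq u u' Δx j) * (x - (2 * (j : ℝ)) * Δx))
    (huD2 : ∀ x ∈ Icc ((2 * (j : ℝ) + 1) * Δx) ((2 * (j : ℝ) + 2) * Δx),
      uD x = u ((2 * (j : ℝ) + 2) * Δx)
        + (Du u Δx j + s * qq u u' Δx j) * (x - (2 * (j : ℝ) + 2) * Δx))
    {x : ℝ} (hx : x ∈ Icc ((2 * (j : ℝ)) * Δx) ((2 * (j : ℝ) + 2) * Δx)) :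
    |u x - uD x| ≤ 2 * Real.sqrt (cellEnergy u' Δx j) * Real.sqrt Δx := by
  have hF := cellEnergy_nonneg (u' := u') hΔx.le j
  rcases le_total x ((2 * (j : ℝ) + 1) * Δx) with hxM | hMx
  · have hsub := sq_sub_le_mul_cellEnergy hu hu'sq le_rfl hx.1 (by linarith [hx.2])
    rw [huD1 x ⟨hx.1, hxM⟩, sub_add_eq_sub_sub, sub_eq_add_neg (Du u Δx j), ← neg_mul]
    refine abs_sub_mul_le_of_sq_le hΔx.le (hsub.trans ?_)
      (sq_Du_add_mul_qq_mul_le hΔx hu hu'sq j (by rw [neg_sq, hs]))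
      (abs_le.2 ⟨by linarith [hx.1], by linarith⟩)
    exact mul_le_mul_of_nonneg_right (by linarith) hF
  · have hsub := sq_sub_le_mul_cellEnergy hu hu'sq hx.1 hx.2 le_rfl
    rw [huD2 x ⟨hMx, hx.2⟩, sub_add_eq_sub_sub]
    refine abs_sub_mul_le_of_sq_le hΔx.le ?_ (sq_Du_add_mul_qq_mul_le hΔx hu hu'sq j hs)
      (abs_le.2 ⟨by linarith, by linarith [hx.2]⟩)
    rw [← neg_sub, neg_sq]
    exact hsub.trans (mul_le_mul_of_nonneg_right (by linarith) hF)

end Cell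

/-- `L^2`-error estimate for the piecewise linear projection `u_Δx`. -/
theorem stmt3 (u u' uD : ℝ → ℝ) (Δx : ℝ) (hΔx : 0 < Δx)
    (hu : ∀ a b : ℝ, u b - u a = ∫ z in a..b, u' z)
    (hu'sq : Integrable (fun z => (u' z)^2))
    (s : ℤ → ℝ) (hs : ∀ j, s j = 1 ∨ s j = -1)
    (huD1 : ∀ j : ℤ, ∀ x ∈ Set.Icc ((2*(j:ℝ))*Δx) ((2*(j:ℝ)+1)*Δx),
      uD x = u ((2*(j:ℝ))*Δx) + (Du u Δx j - s j * qq u u' Δx j) * (x - (2*(j:ℝ))*Δx))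
    (huD2 : ∀ j : ℤ, ∀ x ∈ Set.Icc ((2*(j:ℝ)+1)*Δx) ((2*(j:ℝ)+2)*Δx),
      uD x = u ((2*(j:ℝ)+2)*Δx) + (Du u Δx j + s j * qq u u' Δx j) * (x - (2*(j:ℝ)+2)*Δx)) :
    eLpNorm (fun x => u x - uD x) 2 volume
      ≤ ENNReal.ofReal (Real.sqrt 2 * (1 + Real.sqrt 2) * Real.sqrt (∫ z, (u' z)^2) * Δx) := by
  have hcell : ∀ n : ℤ,
      (n : ℝ) * (2 * Δx) = 2 * n * Δx ∧ (n + 1 : ℝ) * (2 * Δx) = (2 * n + 2) * Δx :=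
    fun n => ⟨by ring, by ring⟩
  refine (eLpNorm_two_le_of_abs_le_mul_sqrt_cell (p := 2 * Δx) (c := 2 * Real.sqrt Δx)
    (by positivity) (by positivity) hu'sq (fun z => sq_nonneg (u' z)) fun n x hx => ?_).trans ?_
  · rw [(hcell n).1, (hcell n).2] at hx ⊢
    have hs2 : s n ^ 2 = 1 := by rcases hs n with h | h <;> rw [h] <;> norm_num
    exact (abs_sub_le_of_mem_cell hΔx hu hu'sq hs2 (huD1 n) (huD2 n)
      (Ico_subset_Icc_self hx)).trans_eq (by rw [cellEnergy]; ring)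
  · refine ENNReal.ofReal_le_ofReal ?_
    rw [Real.sqrt_mul (by positivity), Real.sqrt_mul zero_le_two]
    calc 2 * Real.sqrt Δx * (Real.sqrt 2 * Real.sqrt Δx * Real.sqrt (∫ z, u' z ^ 2))
        = Real.sqrt 2 * 2 * Real.sqrt (∫ z, u' z ^ 2) * Δx := by
          linear_combination (2 * Real.sqrt 2 * Real.sqrt (∫ z, u' z ^ 2))
            * Real.mul_self_sqrt hΔx.le
      _ ≤ Real.sqrt 2 * (1 + Real.sqrt 2) * Real.sqrt (∫ z, u' z ^ 2) * Δx := by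
          gcongr
          linarith [Real.one_lt_sqrt_two]
end

section
/- Let $F:\mathbb{R}\to[0,\infty)$ be nondecreasing, left-continuous, with $\lim_{x\to-\infty}F(x)=0$ and $F_\infty=\lim_{x\to\infty}F(x)<\infty$. Suppose $F_{\Delta x}:\mathbb{R}\to[0,\infty)$ satisfies $F(x_{2j})\leq F_{\Delta x}(x)\leq F(x_{2j+2})$ and $F(x_{2j})\leq F(x)\leq F(x_{2j+2})$ for all $x\in(x_{2j},x_{2j+2}]$, where $x_j=j\Delta x$. Then $\|F-F_{\Delta x}\|_{L^1(\mathbb{R})}\leq 2F_\infty\Delta x$ and $\|F-F_{\Delta x}\|_{L^2(\mathbb{R})}\leq\sqrt{2}\,F_\infty\Delta x^{1/2}$. -/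
/-!
On the cell `(j h, (j + 1) h]` both `F` and the approximation are squeezed between `F (j h)` and
`F ((j + 1) h)`, so their difference is at most the oscillation `d j` of `F` over the cell. Hence
`∫ |F - G|^p ≤ h ∑ d j ^ p ≤ h (b - a)^(p - 1) ∑ d j`, and the oscillations telescope to at most
the total variation `b - a` of the monotone function `F`. With `h = 2 Δx`, `a = 0`, `b = F∞`
this gives the `L¹` and `L²` bounds.
-/

open MeasureTheory Filter Set
open scoped ENNReal

theorem tsum_ofReal_sub_le_of_monotone {G : ℤ → ℝ} (hG : Monotone G) {a b : ℝ}
    (ha : ∀ j, a ≤ G j) (hb : ∀ j, G j ≤ b) :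
    ∑' j, ENNReal.ofReal (G (j + 1) - G j) ≤ ENNReal.ofReal (b - a) := by
  refine le_of_tendsto' (ENNReal.summable.hasSum.comp Finset.tendsto_Ico_neg) fun n => ?_
  have htele : ∑ j ∈ Finset.Ico (-n : ℤ) n, (G (j + 1) - G j) = G n - G (-n) := by
    simpa only [Pi.neg_apply, neg_sub_neg] using Finset.sum_Ico_int_sub n (-G)
  rw [Function.comp_apply, ← ENNReal.ofReal_sum_of_nonneg fun j _ => sub_nonneg.2 (hG (by omega)),
    htele]
  exact ENNReal.ofReal_le_ofReal (by linarith [ha (-n), hb n])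

theorem lintegral_le_tsum_mul_measure {α ι : Type*} [MeasurableSpace α] [Countable ι]
    {μ : Measure α} {f : α → ℝ≥0∞} {s : ι → Set α} {c : ι → ℝ≥0∞}
    (hs : ∀ i, MeasurableSet (s i)) (hcover : ⋃ i, s i = univ) (hf : ∀ i, ∀ x ∈ s i, f x ≤ c i) :
    ∫⁻ x, f x ∂μ ≤ ∑' i, c i * μ (s i) := by
  calc ∫⁻ x, f x ∂μ = ∫⁻ x in ⋃ i, s i, f x ∂μ := by rw [hcover, Measure.restrict_univ]
    _ ≤ ∑' i, ∫⁻ x in s i, f x ∂μ := lintegral_iUnion_le s f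
    _ ≤ ∑' i, c i * μ (s i) := by
      gcongr with i
      rw [← setLIntegral_const]
      exact setLIntegral_mono_ae' (hs i) (ae_of_all _ (hf i))

theorem Real.rpow_le_rpow_sub_one_mul {x M q : ℝ} (hx : 0 ≤ x) (hxM : x ≤ M) (hq : 1 ≤ q) :
    x ^ q ≤ M ^ (q - 1) * x := by
  calc x ^ q = x ^ (q - 1) * x := by
        rw [← Real.rpow_add_one' hx (by linarith), sub_add_cancel]
    _ ≤ M ^ (q - 1) * x := by gcongr

theorem lintegral_enorm_sub_rpow_le_of_sandwich {F G : ℝ → ℝ} {h a b q : ℝ} (hh : 0 < h)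
    (hq : 1 ≤ q) (hF : Monotone F) (ha : ∀ x, a ≤ F x) (hb : ∀ x, F x ≤ b)
    (hG : ∀ j : ℤ, ∀ x ∈ Ioc (j * h) ((j + 1) * h), F (j * h) ≤ G x ∧ G x ≤ F ((j + 1) * h)) :
    ∫⁻ x, ‖F x - G x‖ₑ ^ q ≤ ENNReal.ofReal (h * (b - a) ^ q) := by
  set Fh : ℤ → ℝ := fun j => F (j * h)
  have hFh : Monotone Fh := fun i j hij => hF (by gcongr)
  have hcells : ⋃ j : ℤ, Ioc (j * h) ((j + 1) * h) = univ := by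
    simpa only [zsmul_eq_mul, Int.cast_add, Int.cast_one] using iUnion_Ioc_zsmul hh
  have hpointwise : ∀ j : ℤ, ∀ x ∈ Ioc (j * h) ((j + 1) * h),
      ‖F x - G x‖ₑ ^ q ≤ ENNReal.ofReal ((b - a) ^ (q - 1) * (Fh (j + 1) - Fh j)) := by
    intro j x hx
    obtain ⟨hGlo, hGhi⟩ := hG j x hx
    have hFlo : F (j * h) ≤ F x := hF hx.1.le
    have hFhi : F x ≤ F ((j + 1) * h) := hF hx.2
    have hosc : |F x - G x| ≤ Fh (j + 1) - Fh j := by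
      simp only [Fh, Int.cast_add, Int.cast_one]
      exact abs_sub_le_iff.2 ⟨by linarith, by linarith⟩
    rw [Real.enorm_eq_ofReal_abs, ENNReal.ofReal_rpow_of_nonneg (abs_nonneg _) (by linarith)]
    refine ENNReal.ofReal_le_ofReal ?_
    calc |F x - G x| ^ q ≤ (Fh (j + 1) - Fh j) ^ q := by gcongr
      _ ≤ (b - a) ^ (q - 1) * (Fh (j + 1) - Fh j) :=
        Real.rpow_le_rpow_sub_one_mul ((abs_nonneg _).trans hosc)
          (by linarith [ha (j * h), hb ((j + 1 : ℤ) * h)]) hq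
  have hba : 0 ≤ b - a := sub_nonneg.2 ((ha 0).trans (hb 0))
  calc ∫⁻ x, ‖F x - G x‖ₑ ^ q
      ≤ ∑' j : ℤ, ENNReal.ofReal ((b - a) ^ (q - 1) * (Fh (j + 1) - Fh j)) *
          volume (Ioc (j * h) ((j + 1) * h)) :=
        lintegral_le_tsum_mul_measure (fun _ => measurableSet_Ioc) hcells hpointwise
    _ = ENNReal.ofReal ((b - a) ^ (q - 1)) * ENNReal.ofReal h *
          ∑' j : ℤ, ENNReal.ofReal (Fh (j + 1) - Fh j) := by
        rw [← ENNReal.tsum_mul_left]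
        refine tsum_congr fun j => ?_
        rw [Real.volume_Ioc, show ((j : ℝ) + 1) * h - j * h = h by ring,
          ENNReal.ofReal_mul (by positivity)]
        ring
    _ ≤ ENNReal.ofReal ((b - a) ^ (q - 1)) * ENNReal.ofReal h * ENNReal.ofReal (b - a) := by
        gcongr
        exact tsum_ofReal_sub_le_of_monotone hFh (fun _ => ha _) (fun _ => hb _)
    _ = ENNReal.ofReal (h * (b - a) ^ q) := by
        rw [← ENNReal.ofReal_mul (by positivity), ← ENNReal.ofReal_mul (by positivity)]
        congr 1
        rw [mul_comm _ h, mul_assoc, ← Real.rpow_add_one' hba (by linarith), sub_add_cancel]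

theorem eLpNorm_sub_le_of_sandwich {F G : ℝ → ℝ} {h a b : ℝ} {p : ℝ≥0∞} (hh : 0 < h)
    (hp : 1 ≤ p) (hp_top : p ≠ ∞) (hF : Monotone F) (ha : ∀ x, a ≤ F x) (hb : ∀ x, F x ≤ b)
    (hG : ∀ j : ℤ, ∀ x ∈ Ioc (j * h) ((j + 1) * h), F (j * h) ≤ G x ∧ G x ≤ F ((j + 1) * h)) :
    eLpNorm (fun x => F x - G x) p volume ≤ ENNReal.ofReal (h ^ (1 / p.toReal) * (b - a)) := by
  have hq : 1 ≤ p.toReal := by simpa using ENNReal.toReal_mono hp_top hp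
  have hba : 0 ≤ b - a := sub_nonneg.2 ((ha 0).trans (hb 0))
  rw [eLpNorm_eq_lintegral_rpow_enorm_toReal (by positivity) hp_top]
  calc (∫⁻ x, ‖F x - G x‖ₑ ^ p.toReal) ^ (1 / p.toReal)
      ≤ ENNReal.ofReal (h * (b - a) ^ p.toReal) ^ (1 / p.toReal) := by
        gcongr
        exact lintegral_enorm_sub_rpow_le_of_sandwich hh hq hF ha hb hG
    _ = ENNReal.ofReal (h ^ (1 / p.toReal) * (b - a)) := by
        rw [ENNReal.ofReal_rpow_of_nonneg (by positivity) (by positivity),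
          Real.mul_rpow hh.le (by positivity), one_div, Real.rpow_rpow_inv hba (by linarith)]

theorem stmt4_general (F FD : ℝ → ℝ) (Δx Finf : ℝ) (hΔx : 0 < Δx)
    (hFmono : Monotone F) (hFpos : ∀ x, 0 ≤ F x)
    (hFtop : Tendsto F atTop (nhds Finf))
    (hsand : ∀ j : ℤ, ∀ x ∈ Set.Ioc ((2*(j:ℝ))*Δx) ((2*(j:ℝ)+2)*Δx),
      F ((2*(j:ℝ))*Δx) ≤ FD x ∧ FD x ≤ F ((2*(j:ℝ)+2)*Δx)) :
    eLpNorm (fun x => F x - FD x) 1 volume ≤ ENNReal.ofReal (2 * Finf * Δx) ∧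
    eLpNorm (fun x => F x - FD x) 2 volume
      ≤ ENNReal.ofReal (Real.sqrt 2 * Finf * Real.sqrt Δx) := by
  have hFle : ∀ x, F x ≤ Finf := hFmono.ge_of_tendsto hFtop
  have hcells : ∀ j : ℤ, ∀ x ∈ Ioc (j * (2 * Δx)) ((j + 1) * (2 * Δx)),
      F (j * (2 * Δx)) ≤ FD x ∧ FD x ≤ F ((j + 1) * (2 * Δx)) := by
    intro j x hx
    rw [show (j : ℝ) * (2 * Δx) = 2 * j * Δx by ring,
      show ((j : ℝ) + 1) * (2 * Δx) = (2 * j + 2) * Δx by ring] at hx ⊢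
    exact hsand j x hx
  have hL : ∀ p : ℝ≥0∞, 1 ≤ p → p ≠ ∞ → eLpNorm (fun x => F x - FD x) p volume ≤
      ENNReal.ofReal ((2 * Δx) ^ (1 / p.toReal) * (Finf - 0)) := fun p hp hp_top =>
    eLpNorm_sub_le_of_sandwich (by positivity) hp hp_top hFmono hFpos hFle hcells
  constructor
  · convert hL 1 le_rfl ENNReal.one_ne_top using 2
    rw [ENNReal.toReal_one, div_one, Real.rpow_one]
    ring
  · convert hL 2 one_le_two ENNReal.ofNat_ne_top using 2
    rw [ENNReal.toReal_ofNat, ← Real.sqrt_eq_rpow, Real.sqrt_mul zero_le_two]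
    ring

/-- `L^1`- and `L^2`-error estimates for a cell-wise sandwiched approximation `F_Δx`
of a nondecreasing left-continuous cumulative energy function `F`. -/
theorem stmt4 (F FD : ℝ → ℝ) (Δx Finf : ℝ) (hΔx : 0 < Δx)
    (hFmono : Monotone F) (hFpos : ∀ x, 0 ≤ F x)
    (hFlc : ∀ x : ℝ, Tendsto F (nhdsWithin x (Set.Iio x)) (nhds (F x)))
    (hFbot : Tendsto F atBot (nhds 0))
    (hFtop : Tendsto F atTop (nhds Finf))
    (hFDpos : ∀ x, 0 ≤ FD x)
    (hsand : ∀ j : ℤ, ∀ x ∈ Set.Ioc ((2*(j:ℝ))*Δx) ((2*(j:ℝ)+2)*Δx),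
      F ((2*(j:ℝ))*Δx) ≤ FD x ∧ FD x ≤ F ((2*(j:ℝ)+2)*Δx)) :
    eLpNorm (fun x => F x - FD x) 1 volume ≤ ENNReal.ofReal (2 * Finf * Δx) ∧
    eLpNorm (fun x => F x - FD x) 2 volume
      ≤ ENNReal.ofReal (Real.sqrt 2 * Finf * Real.sqrt Δx) :=
  stmt4_general F FD Δx Finf hΔx hFmono hFpos hFtop hsand
end

section
/- Let $u,u_{\Delta x}$ be bounded continuous functions on $\mathbb{R}$ with $u_x,u_{\Delta x,x}\in L^2(\mathbb{R})$ and $\|u_{\Delta x,x}\|_{L^2}^2\leq F_{\mathrm{ac},\infty}$. Let $y,y_{\Delta x}:\mathbb{R}\to\mathbb{R}$ be nondecreasing surjective maps and define $U=u\circ y$, $U_{\Delta x}=u_{\Delta x}\circ y_{\Delta x}$. Then $\|U-U_{\Delta x}\|_{L^\infty}\leq\|u-u_{\Delta x}\|_{L^\infty}+\sqrt{F_{\mathrm{ac},\infty}}\sqrt{\|y-y_{\Delta x}\|_{L^\infty}}$. -/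
/-!
Split `U - U_Δx` at `u_Δx (y ξ)`. The first part is bounded by the Eulerian error; the second is
`∫ u_Δx,x` over an interval of length at most `‖y - y_Δx‖_∞`, which Cauchy–Schwarz bounds by
`‖u_Δx,x‖_{L²}` times the square root of that length.
-/

open MeasureTheory intervalIntegral Set

theorem abs_integral_le_sqrt_integral_sq_mul_sqrt_measureReal {α : Type*} [MeasurableSpace α]
    {μ : Measure α} [IsFiniteMeasure μ] {g : α → ℝ} (hg : Integrable (fun x => g x ^ 2) μ) :
    |∫ x, g x ∂μ| ≤ √(∫ x, g x ^ 2 ∂μ) * √(μ.real univ) := by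
  by_cases hgi : Integrable g μ
  swap
  · rw [integral_undef hgi, abs_zero]
    positivity
  have hg2 : MemLp g (ENNReal.ofReal 2) μ := by
    rw [ENNReal.ofReal_ofNat]
    exact (memLp_two_iff_integrable_sq hgi.aestronglyMeasurable).2 hg
  have holder := integral_mul_norm_le_Lp_mul_Lq Real.HolderConjugate.two_two hg2
    (memLp_const (1 : ℝ))
  simp only [norm_one, mul_one, Real.rpow_two, Real.norm_eq_abs, sq_abs, one_pow,
    MeasureTheory.integral_const, smul_eq_mul] at holder
  calc |∫ x, g x ∂μ| ≤ ∫ x, |g x| ∂μ := abs_integral_le_integral_abs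
    _ ≤ _ := holder
    _ = √(∫ x, g x ^ 2 ∂μ) * √(μ.real univ) := by
      rw [Real.sqrt_eq_rpow, Real.sqrt_eq_rpow]

theorem abs_intervalIntegral_le_sqrt_integral_sq_mul_sqrt {g : ℝ → ℝ}
    (hg : Integrable (fun x => g x ^ 2)) (a b : ℝ) :
    |∫ x in a..b, g x| ≤ √(∫ x, g x ^ 2) * √|b - a| := by
  rw [abs_integral_eq_abs_integral_uIoc]
  have : IsFiniteMeasure (volume.restrict (uIoc a b)) :=
    isFiniteMeasure_restrict.2 (by simp [Real.volume_uIoc])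
  calc |∫ x in uIoc a b, g x|
      ≤ √(∫ x in uIoc a b, g x ^ 2) * √(volume.real (uIoc a b)) := by
        simpa using abs_integral_le_sqrt_integral_sq_mul_sqrt_measureReal hg.restrict
    _ ≤ √(∫ x, g x ^ 2) * √|b - a| := by
        rw [measureReal_def, Real.volume_uIoc, ENNReal.toReal_ofReal (abs_nonneg _)]
        exact mul_le_mul_of_nonneg_right (Real.sqrt_le_sqrt
          (setIntegral_le_integral hg (.of_forall fun x => sq_nonneg (g x)))) (Real.sqrt_nonneg _)

theorem stmt11_general (u uD uD' : ℝ → ℝ) (Facinf : ℝ)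
    (hftcD : ∀ a b : ℝ, uD b - uD a = ∫ z in a..b, uD' z)
    (hintD : Integrable (fun z => (uD' z)^2))
    (hED : (∫ z, (uD' z)^2) ≤ Facinf)
    (y yD : ℝ → ℝ)
    (Cu Cy : ℝ)
    (hCu : ∀ x, |u x - uD x| ≤ Cu)
    (hCy : ∀ ξ, |y ξ - yD ξ| ≤ Cy) :
    ∀ ξ, |u (y ξ) - uD (yD ξ)| ≤ Cu + Real.sqrt Facinf * Real.sqrt Cy := by
  intro ξ
  have hD : |uD (y ξ) - uD (yD ξ)| ≤ √Facinf * √Cy := by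
    rw [abs_sub_comm, hftcD]
    calc |∫ z in y ξ..yD ξ, uD' z| ≤ √(∫ z, uD' z ^ 2) * √|yD ξ - y ξ| :=
          abs_intervalIntegral_le_sqrt_integral_sq_mul_sqrt hintD _ _
      _ ≤ √Facinf * √Cy := by
          rw [abs_sub_comm]
          gcongr
          exact hCy ξ
  calc |u (y ξ) - uD (yD ξ)| ≤ |u (y ξ) - uD (y ξ)| + |uD (y ξ) - uD (yD ξ)| :=
        abs_sub_le _ _ _
    _ ≤ Cu + √Facinf * √Cy := add_le_add (hCu _) hD

/-- `L^∞`-estimate for the Lagrangian velocities `U = u ∘ y`, `U_Δx = u_Δx ∘ y_Δx`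
in terms of the Eulerian error and the error in the characteristics. -/
theorem stmt11 (u uD u' uD' : ℝ → ℝ) (Facinf : ℝ) (h0 : 0 ≤ Facinf)
    (hcont : Continuous u) (hub : ∃ M, ∀ x, |u x| ≤ M)
    (huDcont : Continuous uD) (huDb : ∃ M, ∀ x, |uD x| ≤ M)
    (hftc : ∀ a b : ℝ, u b - u a = ∫ z in a..b, u' z)
    (hftcD : ∀ a b : ℝ, uD b - uD a = ∫ z in a..b, uD' z)
    (hint : Integrable (fun z => (u' z)^2))
    (hintD : Integrable (fun z => (uD' z)^2))
    (hED : (∫ z, (uD' z)^2) ≤ Facinf)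
    (y yD : ℝ → ℝ)
    (hy : Monotone y) (hys : Function.Surjective y)
    (hyD : Monotone yD) (hyDs : Function.Surjective yD)
    (Cu Cy : ℝ)
    (hCu : ∀ x, |u x - uD x| ≤ Cu)
    (hCy : ∀ ξ, |y ξ - yD ξ| ≤ Cy) :
    ∀ ξ, |u (y ξ) - uD (yD ξ)| ≤ Cu + Real.sqrt Facinf * Real.sqrt Cy :=
  stmt11_general u uD uD' Facinf hftcD hintD hED y yD Cu Cy hCu hCy
end

section
/- Consider the system $y_t(t,\xi)=U(t,\xi)$, $U_t(t,\xi)=\tfrac12 V(t,\xi)-\tfrac14 V_\infty(t)$ where $0\leq V(t,\xi)\leq V_\infty(t)\leq H_\infty$ for all $t\geq 0$ and $V_\infty$ is measurable. Suppose a characteristic $\xi$ satisfies $U_\xi(0,\xi)<0$, $y_\xi(0,\xi)>0$ and the differentiated evolution $y_{t\xi}=U_\xi$, $U_{t\xi}=\tfrac12 V_\xi$ with $0\leq V_\xi(t,\xi)\leq 1$ constant in time before breaking. If $\tau(\xi)=-2y_\xi(0,\xi)/U_\xi(0,\xi)$ is the first time with $y_\xi(\tau(\xi),\xi)=0$, then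 $\mathrm{meas}\{\xi\in\mathbb{R}:\tau(\xi)\leq t\}\leq\left(1+\tfrac14 t^2\right)H_\infty$, where $H_\infty=\int_{\mathbb{R}}H_\xi(0,\eta)d\eta$ and $V_\xi(0,\cdot)\leq H_\xi(0,\cdot)$ with $y_\xi(0,\cdot)+H_\xi(0,\cdot)=1$ a.e. -/
open MeasureTheory ENNReal

/-- The measure of the set of Lagrangian labels that experience wave breaking up to
time `t` is bounded by `(1 + t²/4) H_∞`. -/
theorem stmt16 (y0 U0 V0 H0 : ℝ → ℝ)
    (hy0m : Measurable y0) (hU0m : Measurable U0) (hV0m : Measurable V0)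
    (hH0m : Measurable H0) (hH0int : Integrable H0)
    (hae : ∀ᵐ ξ ∂(volume : Measure ℝ),
      0 ≤ y0 ξ ∧ 0 ≤ H0 ξ ∧ 0 ≤ V0 ξ ∧ V0 ξ ≤ H0 ξ ∧ y0 ξ + H0 ξ = 1 ∧
        (U0 ξ)^2 = y0 ξ * V0 ξ)
    (τ : ℝ → ℝ≥0∞)
    (hτ : ∀ ξ, τ ξ = if U0 ξ < 0 then ENNReal.ofReal (-2 * y0 ξ / U0 ξ)
      else if y0 ξ = 0 ∧ U0 ξ = 0 then 0 else ⊤)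
    (t : ℝ) (ht : 0 ≤ t) :
    volume {ξ : ℝ | τ ξ ≤ ENNReal.ofReal t}
      ≤ ENNReal.ofReal ((1 + t^2/4) * ∫ η, H0 η) := by
  set c : ℝ := 1 + t^2/4 with hc
  have hc0 : (0:ℝ) ≤ c := by positivity
  set S : Set ℝ := {ξ : ℝ | τ ξ ≤ ENNReal.ofReal t} with hS
  have hτm : Measurable τ := by
    have hfe : τ = fun ξ => if U0 ξ < 0 then ENNReal.ofReal (-2 * y0 ξ / U0 ξ)
        else if y0 ξ = 0 ∧ U0 ξ = 0 then 0 else ⊤ := funext hτ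
    rw [hfe]
    apply Measurable.ite (measurableSet_lt hU0m measurable_const)
    · exact ((measurable_const.mul hy0m).div hU0m).ennreal_ofReal
    · refine Measurable.ite ?_ measurable_const measurable_const
      have : {ξ : ℝ | y0 ξ = 0 ∧ U0 ξ = 0}
          = (y0 ⁻¹' {0}) ∩ (U0 ⁻¹' {0}) := by ext ξ; simp [Set.mem_setOf_eq]
      rw [this]
      exact (hy0m (measurableSet_singleton 0)).inter (hU0m (measurableSet_singleton 0))
  have hSmeas : MeasurableSet S := hτm measurableSet_Iic
  have hkey : ∀ᵐ ξ ∂(volume.restrict S), (1:ℝ≥0∞) ≤ ENNReal.ofReal (c * H0 ξ) := by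
    filter_upwards [ae_restrict_of_ae hae, ae_restrict_mem hSmeas] with ξ hprop hmem
    obtain ⟨hy, hH, hV, hVH, hsum, hU2⟩ := hprop
    rw [hS, Set.mem_setOf_eq, hτ] at hmem
    have hgoal : (1:ℝ) ≤ c * H0 ξ := by
      rw [hc]
      split_ifs at hmem with h1 h2
      · have hle : -2 * y0 ξ / U0 ξ ≤ t := by
          rwa [ENNReal.ofReal_le_ofReal_iff ht] at hmem
        have h2y : 2 * y0 ξ ≤ t * (-U0 ξ) := by
          rw [div_le_iff_of_neg h1] at hle
          nlinarith
        have hsq : 4 * (y0 ξ)^2 ≤ t^2 * (y0 ξ * V0 ξ) := by nlinarith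
        by_cases hy0 : y0 ξ = 0
        · rw [hy0] at hsum; nlinarith [sq_nonneg t]
        · have hy0' : 0 < y0 ξ := lt_of_le_of_ne hy (Ne.symm hy0)
          have h4 : 4 * y0 ξ ≤ t^2 * V0 ξ := by
            have := mul_le_mul_of_nonneg_right hsq (le_of_lt hy0')
            nlinarith
          nlinarith [mul_le_mul_of_nonneg_left hVH (sq_nonneg t), sq_nonneg t]
      · rw [h2.1] at hsum; nlinarith [sq_nonneg t]
      · exact absurd hmem (by simp)
    calc (1:ℝ≥0∞) = ENNReal.ofReal 1 := by simp
      _ ≤ ENNReal.ofReal (c * H0 ξ) := ENNReal.ofReal_le_ofReal hgoal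
  have hnn : (0:ℝ → ℝ) ≤ᵐ[volume] fun ξ => c * H0 ξ := by
    filter_upwards [hae] with ξ hprop
    exact mul_nonneg hc0 hprop.2.1
  calc volume S = ∫⁻ _ξ in S, 1 := (setLIntegral_one S).symm
    _ ≤ ∫⁻ ξ in S, ENNReal.ofReal (c * H0 ξ) := lintegral_mono_ae hkey
    _ ≤ ∫⁻ ξ, ENNReal.ofReal (c * H0 ξ) := setLIntegral_le_lintegral _ _
    _ = ENNReal.ofReal (∫ ξ, c * H0 ξ) :=
        (ofReal_integral_eq_lintegral_ofReal (hH0int.const_mul c) hnn).symm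
    _ = ENNReal.ofReal (c * ∫ η, H0 η) := by rw [integral_const_mul]
end
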